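/- AP is contained in AWP: every partial function f :⊆ ℝⁿ → ℝᵐ that belongs to AP also belongs to AWP. -/

import Mathlib

noncomputable section

/-- Evaluation of a vector of multivariate polynomials at a point. -/
def pEval {d e : ℕ} (p : Fin e → MvPolynomial (Fin d) ℝ) (x : Fin d → ℝ) : Fin e → ℝ :=
  fun i => MvPolynomial.eval x (p i)

/-- Length of the solution curve of the PIVP `y' = p(y)` on `[0, t]`
(the sup norm of the derivative is integrated). -/
def pLen {d : ℕ} (p : Fin d → MvPolynomial (Fin d) ℝ) (y : ℝ → Fin d → ℝ) (t : ℝ) : ℝ :=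
  ∫ s in (0:ℝ)..t, ‖pEval p (y s)‖

/-- `Ω : ℝ₊² → ℝ₊` is a polynomial function. -/
def IsPolyFun2 (Ω : ℝ → ℝ → ℝ) : Prop :=
  (∃ P : MvPolynomial (Fin 2) ℝ, ∀ a b : ℝ, Ω a b = MvPolynomial.eval ![a, b] P) ∧
  ∀ a b : ℝ, 0 ≤ a → 0 ≤ b → 0 ≤ Ω a b

/-- The class `AP` of polynomial-length computable partial functions `f :⊆ ℝⁿ → ℝᵐ`
(`dom` is the domain of `f`). -/
def AP {n m : ℕ} (dom : Set (Fin n → ℝ)) (f : (Fin n → ℝ) → (Fin m → ℝ)) : Prop :=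
  ∃ (d : ℕ) (hd : m ≤ d) (p : Fin d → MvPolynomial (Fin d) ℝ)
    (q : Fin d → MvPolynomial (Fin n) ℝ) (Ω : ℝ → ℝ → ℝ),
    IsPolyFun2 Ω ∧
    ∀ x ∈ dom, ∃ y : ℝ → Fin d → ℝ,
      (y 0 = fun i => MvPolynomial.eval x (q i)) ∧
      (∀ t : ℝ, 0 ≤ t → HasDerivAt y (pEval p (y t)) t) ∧
      (∀ t : ℝ, 0 ≤ t → ∀ μ : ℝ, 0 ≤ μ → Ω ‖x‖ μ ≤ pLen p y t →
        ‖(fun i : Fin m => y t (Fin.castLE hd i)) - f x‖ ≤ Real.exp (-μ)) ∧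
      (∀ t : ℝ, 0 ≤ t → t ≤ pLen p y t)

/-- `Υ : ℝ₊³ → ℝ₊` is a polynomial function. -/
def IsPolyFun3 (Υ : ℝ → ℝ → ℝ → ℝ) : Prop :=
  (∃ P : MvPolynomial (Fin 3) ℝ, ∀ a b c : ℝ, Υ a b c = MvPolynomial.eval ![a, b, c] P) ∧
  ∀ a b c : ℝ, 0 ≤ a → 0 ≤ b → 0 ≤ c → 0 ≤ Υ a b c

/-- The class `AWP` of weakly computable partial functions `f :⊆ ℝⁿ → ℝᵐ`. -/
def AWP {n m : ℕ} (dom : Set (Fin n → ℝ)) (f : (Fin n → ℝ) → (Fin m → ℝ)) : Prop :=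
  ∃ (Ω : ℝ → ℝ → ℝ) (Υ : ℝ → ℝ → ℝ → ℝ), IsPolyFun2 Ω ∧ IsPolyFun3 Υ ∧
  ∃ (d : ℕ) (hd : m ≤ d) (p : Fin d → MvPolynomial (Fin d) ℝ)
    (q : Fin d → MvPolynomial (Fin (n + 1)) ℝ),
    ∀ x ∈ dom, ∀ μ : ℝ, 0 ≤ μ → ∃ y : ℝ → Fin d → ℝ,
      (y 0 = fun i => MvPolynomial.eval (Fin.snoc x μ) (q i)) ∧
      (∀ t : ℝ, 0 ≤ t → HasDerivAt y (pEval p (y t)) t) ∧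
      (∀ t : ℝ, 0 ≤ t → Ω ‖x‖ μ ≤ t →
        ‖(fun i : Fin m => y t (Fin.castLE hd i)) - f x‖ ≤ Real.exp (-μ)) ∧
      (∀ t : ℝ, 0 ≤ t → ‖y t‖ ≤ Υ ‖x‖ μ t)

/-!
Only the length of the AP-solution `y` of `y' = p(y)` is controlled, not its growth in time, so
we slow it down. Let `N = 1 + ∑ pᵢ²` and `σ = 1 + ⟨∇N, p⟩²`, and reparametrize time by
`φ' = u = (1 + ∫₀^φ σ(y))⁻¹`. Then `(y ∘ φ, u)` solves the polynomial system `z' = u • p(z)`,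
`u' = -σ(z) u³` with `u(0) = 1`.

Since `(N ∘ y)' = ⟨∇N, p⟩(y) ≤ σ(y)`, we get `N(y(τ)) ≤ N(y(0)) (1 + ∫₀^τ σ(y))`, so the new
solution has speed at most `N(q(x))` and grows polynomially. Conversely, `y` reaches length `Ω`
at some time `T ≤ Ω`, staying in the ball of radius `‖q(x)‖ + Ω` until then; a polynomial bound
`B` for `σ` on that ball gives `φ(t) ≥ T` as soon as `t ≥ Ω (1 + Ω B)`.
-/

namespace MvPolynomial

variable {ι : Type*} [Fintype ι]

theorem hasDerivAt_eval_comp (P : MvPolynomial ι ℝ) {y : ℝ → ι → ℝ} {v : ι → ℝ} {t : ℝ}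
    (hy : HasDerivAt y v t) :
    HasDerivAt (fun s => eval (y s) P) (∑ i, eval (y t) (pderiv i P) * v i) t := by
  classical
  induction P using MvPolynomial.induction_on with
  | C a => simpa using hasDerivAt_const t a
  | add P Q hP hQ =>
    have h : HasDerivAt (fun s => eval (y s) P + eval (y s) Q) _ t := hP.add hQ
    simpa [Finset.sum_add_distrib, add_mul] using h
  | mul_X P j hP =>
    have h : HasDerivAt (fun s => eval (y s) P * y s j) _ t := hP.mul (hasDerivAt_pi.mp hy j)
    simp only [map_mul, eval_X]
    convert h using 1
    simp only [pderiv_mul, pderiv_X, map_add, map_mul, eval_X, add_mul, Finset.sum_add_distrib,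
      Finset.sum_mul]
    simp [Pi.single_apply, mul_right_comm]

theorem exists_abs_eval_le (P : MvPolynomial ι ℝ) :
    ∃ C K, 0 ≤ C ∧ ∀ z : ι → ℝ, |eval z P| ≤ C * (1 + ‖z‖) ^ K := by
  induction P using MvPolynomial.induction_on with
  | C a => exact ⟨|a|, 0, abs_nonneg a, fun z => by simp⟩
  | add P Q hP hQ =>
    obtain ⟨C₁, K₁, hC₁, h₁⟩ := hP
    obtain ⟨C₂, K₂, hC₂, h₂⟩ := hQ
    refine ⟨C₁ + C₂, max K₁ K₂, by positivity, fun z => ?_⟩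
    have hz : 1 ≤ 1 + ‖z‖ := le_add_of_nonneg_right (norm_nonneg z)
    calc |eval z (P + Q)| ≤ |eval z P| + |eval z Q| := by simpa using abs_add_le _ _
      _ ≤ C₁ * (1 + ‖z‖) ^ max K₁ K₂ + C₂ * (1 + ‖z‖) ^ max K₁ K₂ := by
        gcongr
        · exact (h₁ z).trans (by gcongr; exact le_max_left _ _)
        · exact (h₂ z).trans (by gcongr; exact le_max_right _ _)
      _ = (C₁ + C₂) * (1 + ‖z‖) ^ max K₁ K₂ := by ring
  | mul_X P j hP =>
    obtain ⟨C, K, hC, h⟩ := hP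
    refine ⟨C, K + 1, hC, fun z => ?_⟩
    have hj : |z j| ≤ 1 + ‖z‖ := (norm_le_pi_norm z j).trans (le_add_of_nonneg_left zero_le_one)
    calc |eval z (P * X j)| = |eval z P| * |z j| := by simp [abs_mul]
      _ ≤ C * (1 + ‖z‖) ^ K * (1 + ‖z‖) := by gcongr; exact h z
      _ = C * (1 + ‖z‖) ^ (K + 1) := by ring

end MvPolynomial

open MvPolynomial

theorem continuous_pEval {k e : ℕ} (q : Fin e → MvPolynomial (Fin k) ℝ) :
    Continuous (pEval q) :=
  continuous_pi fun i => continuous_eval (q i)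

theorem exists_norm_pEval_le {k e : ℕ} (q : Fin e → MvPolynomial (Fin k) ℝ) :
    ∃ C K, 0 ≤ C ∧ ∀ z, ‖pEval q z‖ ≤ C * (1 + ‖z‖) ^ K := by
  choose C K hC h using fun i => (q i).exists_abs_eval_le
  have hC' : 0 ≤ ∑ i, C i := Finset.sum_nonneg fun i _ => hC i
  refine ⟨∑ i, C i, ∑ i, K i, hC', fun z => ?_⟩
  have hz : 1 ≤ 1 + ‖z‖ := le_add_of_nonneg_right (norm_nonneg z)
  refine pi_norm_le_iff_of_nonneg (mul_nonneg hC' (by positivity)) |>.2 fun j => ?_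
  calc ‖pEval q z j‖ = |eval z (q j)| := rfl
    _ ≤ C j * (1 + ‖z‖) ^ K j := h j z
    _ ≤ (∑ i, C i) * (1 + ‖z‖) ^ ∑ i, K i := by
      gcongr
      · exact Finset.single_le_sum (fun i _ => hC i) (Finset.mem_univ j)
      · exact Finset.single_le_sum (fun i _ => Nat.zero_le (K i)) (Finset.mem_univ j)

section SlowedSystem

variable {d : ℕ} (p : Fin d → MvPolynomial (Fin d) ℝ)

def lieDeriv (P : MvPolynomial (Fin d) ℝ) : MvPolynomial (Fin d) ℝ :=
  ∑ i, pderiv i P * p i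

def majorant : MvPolynomial (Fin d) ℝ :=
  1 + ∑ i, p i ^ 2

def slowdownRate : MvPolynomial (Fin d) ℝ :=
  1 + lieDeriv p (majorant p) ^ 2

def slowSystem : Fin (d + 1) → MvPolynomial (Fin (d + 1)) ℝ :=
  Fin.snoc (fun j => X (Fin.last d) * rename Fin.castSucc (p j))
    (-X (Fin.last d) ^ 3 * rename Fin.castSucc (slowdownRate p))

def slowInit {n : ℕ} (q : Fin d → MvPolynomial (Fin n) ℝ) :
    Fin (d + 1) → MvPolynomial (Fin (n + 1)) ℝ :=
  Fin.snoc (fun j => rename Fin.castSucc (q j)) 1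

theorem hasDerivAt_eval_lieDeriv (P : MvPolynomial (Fin d) ℝ) {y : ℝ → Fin d → ℝ} {t : ℝ}
    (hy : HasDerivAt y (pEval p (y t)) t) :
    HasDerivAt (fun s => eval (y s) P) (eval (y t) (lieDeriv p P)) t := by
  simpa [lieDeriv, pEval] using P.hasDerivAt_eval_comp hy

theorem one_le_eval_majorant (z : Fin d → ℝ) : 1 ≤ eval z (majorant p) := by
  simp only [majorant, map_add, map_one, map_sum, map_pow]
  exact le_add_of_nonneg_right (Finset.sum_nonneg fun i _ => sq_nonneg _)

theorem norm_pEval_le_eval_majorant (z : Fin d → ℝ) : ‖pEval p z‖ ≤ eval z (majorant p) := by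
  refine pi_norm_le_iff_of_nonneg (zero_le_one.trans (one_le_eval_majorant p z)) |>.2 fun j => ?_
  simp only [majorant, map_add, map_one, map_sum, map_pow, pEval, Real.norm_eq_abs]
  have hj : eval z (p j) ^ 2 ≤ ∑ i, eval z (p i) ^ 2 :=
    Finset.single_le_sum (f := fun i => eval z (p i) ^ 2) (fun i _ => sq_nonneg _)
      (Finset.mem_univ j)
  nlinarith [sq_abs (eval z (p j)), sq_nonneg (|eval z (p j)| - 1)]

theorem eval_lieDeriv_majorant_le (z : Fin d → ℝ) :
    eval z (lieDeriv p (majorant p)) ≤ eval z (slowdownRate p) := by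
  simp only [slowdownRate, map_add, map_one, map_pow]
  nlinarith [sq_nonneg (eval z (lieDeriv p (majorant p)) - 1)]

theorem eval_slowdownRate_nonneg (z : Fin d → ℝ) : 0 ≤ eval z (slowdownRate p) := by
  simp only [slowdownRate, map_add, map_one, map_pow]
  positivity

theorem pEval_slowSystem_snoc (z : Fin d → ℝ) (u : ℝ) :
    pEval (slowSystem p) (Fin.snoc z u) =
      Fin.snoc (u • pEval p z) (-eval z (slowdownRate p) * u ^ 3) := by
  ext i
  induction i using Fin.lastCases with
  | last =>
    simp only [pEval, slowSystem, Fin.snoc_last, map_neg, map_mul, map_pow, eval_X, eval_rename,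
      Fin.snoc_comp_castSucc]
    ring
  | cast j => simp [pEval, slowSystem, eval_rename, Fin.snoc_comp_castSucc]

theorem eval_slowInit {n : ℕ} (q : Fin d → MvPolynomial (Fin n) ℝ) (x : Fin n → ℝ) (μ : ℝ) :
    (fun i => eval (Fin.snoc x μ) (slowInit q i)) = Fin.snoc (fun i => eval x (q i)) 1 := by
  ext i
  induction i using Fin.lastCases with
  | last => simp [slowInit]
  | cast j => simp [slowInit, eval_rename, Fin.snoc_comp_castSucc]

theorem hasDerivAt_snoc_slowSystem {y : ℝ → Fin d → ℝ} {φ u : ℝ → ℝ} {t : ℝ}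
    (hy : HasDerivAt y (pEval p (y (φ t))) (φ t)) (hφ : HasDerivAt φ (u t) t)
    (hu : HasDerivAt u (-eval (y (φ t)) (slowdownRate p) * u t ^ 3) t) :
    HasDerivAt (fun s => (Fin.snoc (y (φ s)) (u s) : Fin (d + 1) → ℝ))
      (pEval (slowSystem p) (Fin.snoc (y (φ t)) (u t))) t := by
  rw [pEval_slowSystem_snoc, hasDerivAt_pi]
  intro i
  induction i using Fin.lastCases with
  | last => simpa using hu
  | cast j => simpa using hasDerivAt_pi.mp (hy.scomp t hφ) j

end SlowedSystem

section TimeChange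

open Set Filter

theorem exists_orderIso_of_one_le_deriv {f f' : ℝ → ℝ} (hf : ∀ x, HasDerivAt f (f' x) x)
    (hf' : ∀ x, 1 ≤ f' x) : ∃ e : ℝ ≃o ℝ, ⇑e = f := by
  have hdiff : Differentiable ℝ f := fun x => (hf x).differentiableAt
  have hderiv : ∀ x, 1 ≤ deriv f x := fun x => (hf x).deriv ▸ hf' x
  have hmono : StrictMono f :=
    strictMono_of_deriv_pos fun x => zero_lt_one.trans_le (hderiv x)
  have hsub : ∀ ⦃x y⦄, x ≤ y → y - x ≤ f y - f x := fun x y hxy => by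
    simpa using mul_sub_le_image_sub_of_le_deriv hdiff hderiv hxy
  have hsurj : Function.Surjective f := by
    refine hdiff.continuous.surjective ?_ ?_
    · refine tendsto_atTop_mono' _ ?_ (tendsto_atTop_add_const_right _ (f 0) tendsto_id)
      filter_upwards [eventually_ge_atTop 0] with x hx
      simpa [le_sub_iff_add_le] using hsub hx
    · refine tendsto_atBot_mono' _ ?_ (tendsto_atBot_add_const_right _ (f 0) tendsto_id)
      filter_upwards [eventually_le_atBot 0] with x hx
      simpa [sub_le_sub_iff, add_comm] using hsub hx
  exact ⟨hmono.orderIsoOfSurjective f hsurj, rfl⟩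

theorem exists_inverse_primitive {h : ℝ → ℝ} (hc : Continuous h) (h1 : ∀ x, 1 ≤ h x) :
    ∃ φ : ℝ → ℝ, φ 0 = 0 ∧ Monotone φ ∧ (∀ t, HasDerivAt φ (h (φ t))⁻¹ t) ∧
      ∀ τ t, ∫ s in 0..τ, h s ≤ t → τ ≤ φ t := by
  have hG : ∀ x, HasDerivAt (fun τ => ∫ s in 0..τ, h s) (h x) x := fun x =>
    intervalIntegral.integral_hasDerivAt_right (hc.intervalIntegrable _ _)
      (hc.stronglyMeasurableAtFilter _ _) hc.continuousAt
  obtain ⟨e, he⟩ := exists_orderIso_of_one_le_deriv hG h1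
  refine ⟨e.symm, ?_, e.symm.monotone, fun t => ?_, fun τ t hτ => ?_⟩
  · rw [e.symm_apply_eq, he]
    simp
  · refine HasDerivAt.of_local_left_inverse e.symm.continuous.continuousAt ?_
      (zero_lt_one.trans_le (h1 _)).ne' (Eventually.of_forall e.apply_symm_apply)
    rw [he]
    exact hG _
  · rw [e.le_symm_apply, he]
    exact hτ

theorem exists_timeChange {σ : ℝ → ℝ} (hσ : ContinuousOn σ (Ici 0))
    (hσ0 : ∀ s, 0 ≤ s → 0 ≤ σ s) :
    ∃ φ u : ℝ → ℝ, φ 0 = 0 ∧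
      (∀ t, 0 ≤ t → 0 ≤ φ t ∧ u t = (1 + ∫ s in 0..φ t, σ s)⁻¹ ∧ HasDerivAt φ (u t) t ∧
        HasDerivAt u (-σ (φ t) * u t ^ 3) t) ∧
      ∀ T t, 0 ≤ T → T * (1 + ∫ s in 0..T, σ s) ≤ t → T ≤ φ t := by
  -- extend `σ` continuously to negative times, so that its primitive is differentiable at `0`
  set σ' : ℝ → ℝ := fun s => σ (max s 0)
  have hσ' : Continuous σ' :=
    hσ.comp_continuous (continuous_id.max continuous_const) fun s => le_max_right s 0
  set S : ℝ → ℝ := fun τ => ∫ s in 0..τ, σ' s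
  have hS : ∀ τ, 0 ≤ τ → S τ = ∫ s in 0..τ, σ s := fun τ hτ =>
    intervalIntegral.integral_congr fun s hs => by
      rw [uIcc_of_le hτ] at hs
      simp only [σ', max_eq_left hs.1]
  have hS' : ∀ τ, HasDerivAt S (σ' τ) τ := fun τ =>
    intervalIntegral.integral_hasDerivAt_right (hσ'.intervalIntegrable _ _)
      (hσ'.stronglyMeasurableAtFilter _ _) hσ'.continuousAt
  have hScont : Continuous S := continuous_iff_continuousAt.2 fun τ => (hS' τ).continuousAt
  have hSmono : MonotoneOn S (Ici 0) := monotoneOn_of_deriv_nonneg (convex_Ici 0)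
    (fun τ _ => (hS' τ).continuousAt.continuousWithinAt)
    (fun τ _ => (hS' τ).differentiableAt.differentiableWithinAt)
    (fun τ hτ => (hS' τ).deriv ▸ hσ0 _ (le_max_right τ 0))
  have hS0 : ∀ τ, 0 ≤ τ → 0 ≤ S τ := fun τ hτ => by
    simpa [S] using hSmono self_mem_Ici hτ hτ
  set h : ℝ → ℝ := fun τ => 1 + max (S τ) 0
  obtain ⟨φ, hφ0, hφmono, hφ, hφtime⟩ := exists_inverse_primitive
    (h := h) (continuous_const.add (hScont.max continuous_const))
    fun τ => le_add_of_nonneg_right (le_max_right _ 0)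
  have hφ0' : ∀ t, 0 ≤ t → 0 ≤ φ t := fun t ht => hφ0 ▸ hφmono ht
  have hhφ : ∀ t, 0 ≤ t → h (φ t) = 1 + S (φ t) := fun t ht => by
    simp only [h, max_eq_left (hS0 _ (hφ0' t ht))]
  refine ⟨φ, fun t => (1 + S (φ t))⁻¹, hφ0, fun t ht => ⟨hφ0' t ht,
    by beta_reduce; rw [hS _ (hφ0' t ht)], by beta_reduce; rw [← hhφ t ht]; exact hφ t, ?_⟩,
    fun T t hT hTt => hφtime T t ?_⟩
  · have hpos : 0 < 1 + S (φ t) := by linarith [hS0 _ (hφ0' t ht)]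
    have hd : HasDerivAt (fun s => (1 + S (φ s))⁻¹) _ t :=
      (((hS' (φ t)).comp t (hφ t)).const_add 1).inv hpos.ne'
    convert hd using 1
    simp only [Function.comp, hhφ t ht, σ', max_eq_left (hφ0' t ht)]
    field_simp
  · calc ∫ s in 0..T, h s ≤ ∫ s in 0..T, (1 + S T) := by
          refine intervalIntegral.integral_mono_on hT
            ((continuous_const.add (hScont.max continuous_const)).intervalIntegrable _ _)
            intervalIntegrable_const fun s hs => ?_
          simp only [h, max_eq_left (hS0 s hs.1)]
          linarith [hSmono hs.1 hT hs.2]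
      _ = T * (1 + ∫ s in 0..T, σ s) := by simp [hS T hT]; ring
      _ ≤ t := hTt

end TimeChange

section Solution

open Set

variable {d : ℕ} {p : Fin d → MvPolynomial (Fin d) ℝ} {y : ℝ → Fin d → ℝ}

theorem intervalIntegrable_comp_of_hasDerivAt {E : Type*} [NormedAddCommGroup E]
    {F : (Fin d → ℝ) → E} (hF : Continuous F)
    (hy : ∀ t, 0 ≤ t → HasDerivAt y (pEval p (y t)) t) {τ : ℝ} (hτ : 0 ≤ τ) :
    IntervalIntegrable (fun s => F (y s)) MeasureTheory.volume 0 τ := by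
  refine (hF.comp_continuousOn ((HasDerivAt.continuousOn hy).mono ?_)).intervalIntegrable
  rw [uIcc_of_le hτ]
  exact Icc_subset_Ici_self

theorem eval_majorant_le_mul (hy : ∀ t, 0 ≤ t → HasDerivAt y (pEval p (y t)) t) {τ : ℝ}
    (hτ : 0 ≤ τ) :
    eval (y τ) (majorant p) ≤
      eval (y 0) (majorant p) * (1 + ∫ s in 0..τ, eval (y s) (slowdownRate p)) := by
  have hFTC : ∫ s in 0..τ, eval (y s) (lieDeriv p (majorant p)) =
      eval (y τ) (majorant p) - eval (y 0) (majorant p) := by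
    refine intervalIntegral.integral_eq_sub_of_hasDerivAt
      (f := fun s => eval (y s) (majorant p)) (fun s hs => ?_)
      (intervalIntegrable_comp_of_hasDerivAt (continuous_eval _) hy hτ)
    rw [uIcc_of_le hτ] at hs
    exact hasDerivAt_eval_lieDeriv p _ (hy s hs.1)
  have hle : ∫ s in 0..τ, eval (y s) (lieDeriv p (majorant p)) ≤
      ∫ s in 0..τ, eval (y s) (slowdownRate p) :=
    intervalIntegral.integral_mono_on hτ
      (intervalIntegrable_comp_of_hasDerivAt (continuous_eval _) hy hτ)
      (intervalIntegrable_comp_of_hasDerivAt (continuous_eval _) hy hτ)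
      fun s _ => eval_lieDeriv_majorant_le p (y s)
  have hS : 0 ≤ ∫ s in 0..τ, eval (y s) (slowdownRate p) :=
    intervalIntegral.integral_nonneg hτ fun s _ => eval_slowdownRate_nonneg p (y s)
  nlinarith [one_le_eval_majorant p (y 0)]

theorem norm_sub_le_pLen (hy : ∀ t, 0 ≤ t → HasDerivAt y (pEval p (y t)) t) {τ : ℝ}
    (hτ : 0 ≤ τ) : ‖y τ - y 0‖ ≤ pLen p y τ := by
  rw [← intervalIntegral.integral_eq_sub_of_hasDerivAt (fun s hs => ?_)
    (intervalIntegrable_comp_of_hasDerivAt (continuous_pEval p) hy hτ)]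
  · exact intervalIntegral.norm_integral_le_integral_norm hτ
  · rw [uIcc_of_le hτ] at hs
    exact hy s hs.1

theorem pLen_mono (hy : ∀ t, 0 ≤ t → HasDerivAt y (pEval p (y t)) t) {a b : ℝ} (ha : 0 ≤ a)
    (hab : a ≤ b) : pLen p y a ≤ pLen p y b :=
  intervalIntegral.integral_mono_interval le_rfl ha hab
    (MeasureTheory.ae_of_all _ fun _ => norm_nonneg _)
    (intervalIntegrable_comp_of_hasDerivAt
      (continuous_pEval p).norm hy (ha.trans hab))

theorem exists_pLen_eq (hy : ∀ t, 0 ≤ t → HasDerivAt y (pEval p (y t)) t)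
    (hlen : ∀ t, 0 ≤ t → t ≤ pLen p y t) {L : ℝ} (hL : 0 ≤ L) :
    ∃ T ∈ Icc 0 L, pLen p y T = L := by
  have hcont : ContinuousOn (pLen p y) (Icc 0 L) := by
    rw [← uIcc_of_le hL]
    exact intervalIntegral.continuousOn_primitive_interval'
      (intervalIntegrable_comp_of_hasDerivAt (continuous_pEval p).norm hy hL) left_mem_uIcc
  exact intermediate_value_Icc hL hcont ⟨by simpa [pLen] using hL, hlen L hL⟩

theorem norm_comp_sub_le (hy : ∀ t, 0 ≤ t → HasDerivAt y (pEval p (y t)) t) {φ u : ℝ → ℝ}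
    (hφ0 : φ 0 = 0)
    (hφ : ∀ t, 0 ≤ t → 0 ≤ φ t ∧
      u t = (1 + ∫ s in 0..φ t, eval (y s) (slowdownRate p))⁻¹ ∧ HasDerivAt φ (u t) t)
    {t : ℝ} (ht : 0 ≤ t) : ‖y (φ t) - y 0‖ ≤ eval (y 0) (majorant p) * t := by
  have hderiv : ∀ s ∈ Icc 0 t,
      HasDerivAt (fun s => y (φ s)) (u s • pEval p (y (φ s))) s := fun s hs =>
    (hy _ (hφ s hs.1).1).scomp s (hφ s hs.1).2.2
  have hbound : ∀ s ∈ Ico 0 t, ‖u s • pEval p (y (φ s))‖ ≤ eval (y 0) (majorant p) := by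
    intro s hs
    obtain ⟨hφs, hus, -⟩ := hφ s hs.1
    have hpos : 0 < 1 + ∫ r in 0..φ s, eval (y r) (slowdownRate p) := by
      linarith [intervalIntegral.integral_nonneg (μ := MeasureTheory.volume) hφs
        fun r _ => eval_slowdownRate_nonneg p (y r)]
    rw [norm_smul, hus, Real.norm_of_nonneg (inv_nonneg.2 hpos.le), inv_mul_le_iff₀ hpos]
    calc ‖pEval p (y (φ s))‖ ≤ eval (y (φ s)) (majorant p) := norm_pEval_le_eval_majorant p _
      _ ≤ _ := eval_majorant_le_mul hy hφs
      _ = _ := mul_comm _ _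
  simpa [hφ0] using norm_image_sub_le_of_norm_deriv_le_segment'
    (fun s hs => (hderiv s hs).hasDerivWithinAt) hbound t ⟨ht, le_rfl⟩

theorem exists_slowed_solution (hy : ∀ t, 0 ≤ t → HasDerivAt y (pEval p (y t)) t) :
    ∃ (Y : ℝ → Fin (d + 1) → ℝ) (φ : ℝ → ℝ), Y 0 = Fin.snoc (y 0) 1 ∧
      (∀ t, 0 ≤ t → HasDerivAt Y (pEval (slowSystem p) (Y t)) t) ∧
      (∀ t j, Y t (Fin.castSucc j) = y (φ t) j) ∧
      (∀ t, 0 ≤ t → 0 ≤ φ t ∧ ‖Y t‖ ≤ 1 + ‖y 0‖ + eval (y 0) (majorant p) * t) ∧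
      ∀ T t, 0 ≤ T → T * (1 + ∫ s in 0..T, eval (y s) (slowdownRate p)) ≤ t → T ≤ φ t := by
  obtain ⟨φ, u, hφ0, hφu, htime⟩ := exists_timeChange
    (σ := fun s => eval (y s) (slowdownRate p))
    ((continuous_eval _).comp_continuousOn (HasDerivAt.continuousOn hy))
    fun s _ => eval_slowdownRate_nonneg p (y s)
  have hu0 : u 0 = 1 := by simp [(hφu 0 le_rfl).2.1, hφ0]
  refine ⟨fun t => Fin.snoc (y (φ t)) (u t), φ, by simp [hφ0, hu0], fun t ht => ?_,
    fun t j => by simp, fun t ht => ⟨(hφu t ht).1, ?_⟩, htime⟩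
  · obtain ⟨hφt, -, hφ', hu'⟩ := hφu t ht
    exact hasDerivAt_snoc_slowSystem p (hy _ hφt) hφ' hu'
  · obtain ⟨hφt, hut, -⟩ := hφu t ht
    have hS : 0 ≤ ∫ s in 0..φ t, eval (y s) (slowdownRate p) :=
      intervalIntegral.integral_nonneg hφt fun s _ => eval_slowdownRate_nonneg p (y s)
    have hu : |u t| ≤ 1 := by
      rw [hut, abs_inv, abs_of_nonneg (by linarith)]
      exact inv_le_one_of_one_le₀ (by linarith)
    have hyφ : ‖y (φ t)‖ ≤ ‖y 0‖ + eval (y 0) (majorant p) * t :=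
      (norm_le_insert' _ _).trans (add_le_add_right (norm_comp_sub_le hy hφ0
        (fun s hs => ⟨(hφu s hs).1, (hφu s hs).2.1, (hφu s hs).2.2.1⟩) ht) _)
    have hN : 0 ≤ eval (y 0) (majorant p) * t :=
      mul_nonneg (zero_le_one.trans (one_le_eval_majorant p _)) ht
    refine pi_norm_le_iff_of_nonneg (by positivity) |>.2 fun i => ?_
    induction i using Fin.lastCases with
    | last => simp only [Fin.snoc_last, Real.norm_eq_abs]; linarith [norm_nonneg (y 0)]
    | cast j =>
      simp only [Fin.snoc_castSucc]
      linarith [norm_le_pi_norm (y (φ t)) j]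

theorem le_pLen_comp_of_le (hy : ∀ t, 0 ≤ t → HasDerivAt y (pEval p (y t)) t)
    (hlen : ∀ t, 0 ≤ t → t ≤ pLen p y t) {φ : ℝ → ℝ}
    (htime : ∀ T t, 0 ≤ T → T * (1 + ∫ s in 0..T, eval (y s) (slowdownRate p)) ≤ t → T ≤ φ t)
    {L B : ℝ} (hL : 0 ≤ L) (hB : ∀ z, ‖z‖ ≤ ‖y 0‖ + L → eval z (slowdownRate p) ≤ B) {t : ℝ}
    (ht : L * (1 + L * B) ≤ t) : L ≤ pLen p y (φ t) := by
  obtain ⟨T, ⟨hT0, hTL⟩, hT⟩ := exists_pLen_eq hy hlen hL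
  have hB0 : 0 ≤ B := (eval_slowdownRate_nonneg p (y 0)).trans (hB _ (by linarith))
  have hball : ∀ s ∈ Icc 0 T, ‖y s‖ ≤ ‖y 0‖ + L := fun s hs => by
    linarith [norm_le_insert' (y s) (y 0), norm_sub_le_pLen hy hs.1, pLen_mono hy hs.1 hs.2]
  have hσ : ∫ s in 0..T, eval (y s) (slowdownRate p) ≤ T * B := by
    simpa [mul_comm] using intervalIntegral.integral_mono_on hT0
      (intervalIntegrable_comp_of_hasDerivAt (continuous_eval _) hy hT0)
      intervalIntegrable_const fun s hs => hB (y s) (hball s hs)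
  have hTφ : T ≤ φ t := htime T t hT0 <| calc
    T * (1 + ∫ s in 0..T, eval (y s) (slowdownRate p)) ≤ T * (1 + T * B) := by gcongr
    _ ≤ L * (1 + L * B) := by gcongr
    _ ≤ t := ht
  exact hT ▸ pLen_mono hy hT0 hTφ

end Solution

/-- **`AP ⊆ AWP`**: every partial function in `AP` also belongs to `AWP`. -/
theorem ap_subset_awp {n m : ℕ} (dom : Set (Fin n → ℝ))
    (f : (Fin n → ℝ) → (Fin m → ℝ)) (hf : AP dom f) : AWP dom f := by
  obtain ⟨d, hd, p, q, Ω, ⟨⟨PΩ, hPΩ⟩, hΩ0⟩, hAP⟩ := hf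
  obtain ⟨Cq, Kq, hCq, hq⟩ := exists_norm_pEval_le q
  obtain ⟨CN, KN, hCN, hN⟩ := (majorant p).exists_abs_eval_le
  obtain ⟨Cσ, Kσ, hCσ, hσ⟩ := (slowdownRate p).exists_abs_eval_le
  set Q : ℝ → ℝ := fun a => Cq * (1 + a) ^ Kq
  -- `Q ‖x‖` bounds `‖q(x)‖`; the new convergence time is `Ω (1 + Ω B)`, where `B` bounds `σ`
  -- on the ball of radius `Q ‖x‖ + Ω`
  refine ⟨fun a b => Ω a b * (1 + Ω a b * (Cσ * (1 + (Q a + Ω a b)) ^ Kσ)),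
    fun a _ c => 1 + Q a + CN * (1 + Q a) ^ KN * c,
    ⟨⟨PΩ * (1 + PΩ * (C Cσ * (1 + (C Cq * (1 + X 0) ^ Kq + PΩ)) ^ Kσ)),
      fun a b => by simp [Q, hPΩ]⟩, fun a b ha hb => by have := hΩ0 a b ha hb; positivity⟩,
    ⟨⟨1 + C Cq * (1 + X 0) ^ Kq + C CN * (1 + C Cq * (1 + X 0) ^ Kq) ^ KN * X 2,
      fun a b c => by simp [Q]⟩, fun a b c ha _ hc => by positivity⟩,
    d + 1, hd.trans d.le_succ, slowSystem p, slowInit q, fun x hx μ hμ => ?_⟩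
  obtain ⟨y, hy0, hy, hconv, hlen⟩ := hAP x hx
  obtain ⟨Y, φ, hY0, hY, hYφ, hYbound, htime⟩ := exists_slowed_solution hy
  have hy0Q : ‖y 0‖ ≤ Q ‖x‖ := hy0 ▸ hq x
  refine ⟨Y, by rw [eval_slowInit, hY0, hy0], hY, fun t ht hΩt => ?_, fun t ht => ?_⟩
  · have hL := le_pLen_comp_of_le hy hlen htime (hΩ0 _ _ (norm_nonneg x) hμ)
      (fun z hz => (le_abs_self _).trans ((hσ z).trans (by gcongr; linarith))) hΩt
    convert hconv (φ t) (hYbound t ht).1 μ hμ hL using 4 with i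
    exact hYφ t (Fin.castLE hd i)
  · calc ‖Y t‖ ≤ 1 + ‖y 0‖ + eval (y 0) (majorant p) * t := (hYbound t ht).2
      _ ≤ 1 + Q ‖x‖ + CN * (1 + Q ‖x‖) ^ KN * t := by
        gcongr
        exact (le_abs_self _).trans ((hN _).trans (by gcongr))
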